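/- arXiv:1810.05607 — 2 statements merged into one kernel-verified Lean document; each statement's English description precedes it below -/
import Mathlib

section
/- Fix reals α, β with 0 ≤ α < 1 and β > 2. The subshift Σ has specification if and only if the sets D(a) and D(b) are both bounded. -/
noncomputable section

namespace IntermediateBeta

/-- The intermediate beta transformation `x ↦ βx + α mod 1`. -/
def F (α β : ℝ) (x : ℝ) : ℝ := Int.fract (β * x + α)

/-- The digit sequence of a point: `Om α β x n` is the index `i` with `F^[n] x ∈ J_i`.
For `y ∈ [0,1)` we have `y ∈ J_i ↔ ⌊β y + α⌋ = i`. -/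
def Om (α β : ℝ) (x : ℝ) : ℕ → ℕ := fun n => (⌊β * ((F α β)^[n] x) + α⌋).toNat

/-- `ℓ = ⌈α + β⌉ - 1`. -/
def ell (α β : ℝ) : ℕ := ⌈α + β⌉₊ - 1

/-- The subshift `Σ`: closure (in the product topology) of the set of digit sequences
of points of `[0,1)`. -/
def Sig (α β : ℝ) : Set (ℕ → ℕ) := closure (Om α β '' Set.Ico (0 : ℝ) 1)

/-- The shift map. -/
def shift (x : ℕ → ℕ) : ℕ → ℕ := fun n => x (n + 1)

/-- Lexicographic order on one-sided sequences. -/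
def lexLe (x y : ℕ → ℕ) : Prop := x = y ∨ ∃ k, (∀ i < k, x i = y i) ∧ x k < y k

/-- The language of a subset `S` of the full shift: the finite words occurring as
initial segments of elements of `S`. -/
def langOf (S : Set (ℕ → ℕ)) (w : List ℕ) : Prop :=
  ∃ x ∈ S, ∀ i : Fin w.length, x i = w.get i

/-- Membership in the language `𝓛` of the subshift `Σ`. -/
def inLang (α β : ℝ) (w : List ℕ) : Prop := langOf (Sig α β) w

/-- The tail segment of `w` of length `k` agrees with the initial segment of `s`
of length `k`. -/
def tailAgrees (s : ℕ → ℕ) (w : List ℕ) (k : ℕ) : Prop :=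
  k ≤ w.length ∧ ∀ i < k, w.getD (w.length - k + i) 0 = s i

/-- `kmax s w` is the length of the longest tail segment of `w` agreeing with an
initial segment of `s` (`k₁(w)` when `s = a`, `k₂(w)` when `s = b`). -/
def kmax (s : ℕ → ℕ) (w : List ℕ) : ℕ := sSup {k | tailAgrees s w k}

/-- `D a b` is the set of lengths `n` such that the initial segment of `b` of
length `n` occurs somewhere in `a`.  Thus `D a b` is the set `𝖣(a)` of the paper
and `D b a` is `𝖣(b)`. -/
def D (a b : ℕ → ℕ) : Set ℕ := {n | ∃ j, ∀ i < n, b i = a (j + i)}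

/-- Gluing of the words `w 0, v 0, w 1, v 1, …, v (n-1), w n`. -/
def glue {n : ℕ} (w : Fin (n + 1) → List ℕ) (v : Fin n → List ℕ) : List ℕ :=
  (List.ofFn fun i : Fin n => w i.castSucc ++ v i).flatten ++ w (Fin.last n)

/-- A collection `G` of words inside the language `lang` has specification: there
is `τ ∈ ℕ` such that any finite list of words of `G` can be glued, with gluing
words from `lang` of length `τ`, into a word of `lang`. -/
def HasSpec (lang G : List ℕ → Prop) : Prop :=
  ∃ τ : ℕ, 1 ≤ τ ∧ ∀ n : ℕ, ∀ w : Fin (n + 1) → List ℕ, (∀ i, G (w i)) →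
    ∃ v : Fin n → List ℕ, (∀ i, (v i).length = τ ∧ lang (v i)) ∧ lang (glue w v)

/-- The initial segment of a sequence, as a finite word. -/
def pre (s : ℕ → ℕ) (n : ℕ) : List ℕ := List.ofFn fun i : Fin n => s i

/-- Lexicographic order for finite words (of equal length). -/
def wordLe (u v : List ℕ) : Prop :=
  u = v ∨ ∃ k, (∀ i < k, u.getD i 0 = v.getD i 0) ∧ u.getD k 0 < v.getD k 0

/-- Concatenation of a finite word with an infinite sequence. -/
def wcat (w : List ℕ) (x : ℕ → ℕ) : ℕ → ℕ := fun n =>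
  if h : n < w.length then w.get ⟨n, h⟩ else x (n - w.length)

/-!
The digits of `F` are those of the affine branches `y ↦ β y + α - d`, which expand distances by the
factor `β`. Hence `a = Ω(0)` is the least element of `Σ`, and the greatest one is the digit
sequence of `1` under the left-continuous version of `F`; so `b` is that sequence.

`F^[|w|]` maps the cylinder of a word `w` onto an interval `[F^[k₁] 0, upperOrbit k₂)`, where `w`
ends with the first `k₁` digits of `a` and with the first `k₂` digits of `b`. The shorter of these
two tails is a block shared by `a` and `b`. When `D(a)` and `D(b)` are bounded this keeps the
interval longer than some `δ > 0`, and since `β > 2` a bounded number of further steps maps any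
such interval onto `[0, 1)`: this is specification.

Conversely, if a prefix of `a` of length `n` occurs in `b` at position `j`, then after `j` shifts
every point of `Σ` that follows `b` for `j` steps lies lexicographically between `a` and `σ^j b`,
so its next `n` digits are forced; for `n` beyond the specification gap this is impossible.
Prefixes of `b` occurring in `a` are handled symmetrically.
-/

open Set

def IsOrbit (α β : ℝ) (x : ℕ → ℝ) (d : ℕ → ℕ) : Prop :=
  ∀ n, x (n + 1) = β * x n + α - d n

section Orbit

variable {α β : ℝ} {x y : ℕ → ℝ} {d e : ℕ → ℕ}

lemma IsOrbit.shift (hx : IsOrbit α β x d) (j : ℕ) :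
    IsOrbit α β (fun n => x (j + n)) (fun n => d (j + n)) :=
  fun n => hx (j + n)

lemma IsOrbit.sub_eq_pow_mul (hx : IsOrbit α β x d) (hy : IsOrbit α β y e) {r : ℕ}
    (h : ∀ i < r, d i = e i) : y r - x r = β ^ r * (y 0 - x 0) := by
  induction r with
  | zero => simp
  | succ r ih =>
    rw [hx, hy, h r (by omega), pow_succ]
    linear_combination β * ih fun i hi => h i (by omega)

variable (hx : IsOrbit α β x d) (hy : IsOrbit α β y e) (hβ : 0 < β)
  (hx0 : ∀ n, 0 ≤ x n) (hy1 : ∀ n, y n ≤ 1) (hxy : x 0 < y 0)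
include hx hy hβ hx0 hy1 hxy

/-- By `hx0` and `hy1`, `d n ≤ β x n + α` and `β y n + α ≤ e n + 1`, so the smaller orbit cannot
carry the larger digit. -/
lemma IsOrbit.digit_le {k : ℕ} (hk : ∀ i < k, d i = e i) : d k ≤ e k := by
  have hxy' : x k < y k := by
    have := hx.sub_eq_pow_mul hy hk
    nlinarith [pow_pos hβ k]
  have h1 := hx0 (k + 1)
  have h2 := hy1 (k + 1)
  rw [hx] at h1
  rw [hy] at h2
  have : (d k : ℝ) < e k + 1 := by nlinarith
  exact_mod_cast Nat.lt_succ_iff.1 (by exact_mod_cast this)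

lemma IsOrbit.add_one_sub_le_pow_mul {r : ℕ} (hr : ∀ i < r, d i = e i) (hne : d r ≠ e r) :
    y (r + 1) + (1 - x (r + 1)) ≤ β ^ (r + 1) * (y 0 - x 0) := by
  have hdr : (d r : ℝ) + 1 ≤ e r := by
    exact_mod_cast lt_of_le_of_ne (hx.digit_le hy hβ hx0 hy1 hxy hr) hne
  have hgap : β ^ (r + 1) * (y 0 - x 0) = β * (y r - x r) := by
    rw [hx.sub_eq_pow_mul hy hr, pow_succ]
    ring
  rw [hgap, hx, hy]
  linarith

end Orbit

/-! ### Lexicographic order -/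

lemma lexLe_iff_toLex_le {x y : ℕ → ℕ} : lexLe x y ↔ toLex x ≤ toLex y := by
  rw [le_iff_eq_or_lt]
  rfl

lemma lexLe_antisymm {x y : ℕ → ℕ} (hxy : lexLe x y) (hyx : lexLe y x) : x = y :=
  toLex.injective (le_antisymm (lexLe_iff_toLex_le.1 hxy) (lexLe_iff_toLex_le.1 hyx))

lemma lexLe_of_forall_le {x y : ℕ → ℕ} (h : ∀ k, (∀ i < k, x i = y i) → x k ≤ y k) :
    lexLe x y := by
  by_cases hxy : ∃ k, x k ≠ y k
  · have hmin : ∀ i < Nat.find hxy, x i = y i := fun i hi => not_not.1 (Nat.find_min hxy hi)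
    exact Or.inr ⟨_, hmin, lt_of_le_of_ne (h _ hmin) (Nat.find_spec hxy)⟩
  · exact Or.inl (funext fun k => not_not.1 fun hk => hxy ⟨k, hk⟩)

lemma IsOrbit.lexLe {α β : ℝ} {x y : ℕ → ℝ} {d e : ℕ → ℕ} (hx : IsOrbit α β x d)
    (hy : IsOrbit α β y e) (hβ : 0 < β) (hx0 : ∀ n, 0 ≤ x n) (hy1 : ∀ n, y n ≤ 1)
    (hxy : x 0 < y 0) : lexLe d e :=
  lexLe_of_forall_le fun _ hk => hx.digit_le hy hβ hx0 hy1 hxy hk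

lemma lexLe.agree_of_lexLe {x y z : ℕ → ℕ} (hxy : lexLe x y) (hyz : lexLe y z) {n : ℕ}
    (h : ∀ i < n, x i = z i) : ∀ i < n, y i = x i := by
  rw [lexLe_iff_toLex_le] at hxy hyz
  intro i
  induction i using Nat.strong_induction_on with
  | _ i ih =>
    intro hi
    have hagree : ∀ j < i, y j = x j := fun j hj => ih j hj (hj.trans hi)
    refine le_antisymm ?_ (Pi.apply_le_of_toLex hxy fun j hj => (hagree j hj).symm)
    rw [h i hi]
    exact Pi.apply_le_of_toLex hyz fun j hj => (hagree j hj).trans (h j (hj.trans hi))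

lemma iterate_shift_apply (x : ℕ → ℕ) (j n : ℕ) : (shift^[j] x) n = x (j + n) := by
  induction j generalizing x with
  | zero => simp
  | succ j ih => rw [Function.iterate_succ_apply, ih, shift, Nat.add_right_comm]

lemma lexLe.iterate_shift {x y : ℕ → ℕ} (hxy : lexLe x y) {j : ℕ} (hj : ∀ i < j, x i = y i) :
    lexLe (shift^[j] x) (shift^[j] y) := by
  rcases hxy with rfl | ⟨k, hk, hlt⟩
  · exact Or.inl rfl
  · have hjk : j ≤ k := not_lt.1 fun hkj => hlt.ne (hj k hkj)
    refine Or.inr ⟨k - j, fun i hi => ?_, ?_⟩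
    · simp only [iterate_shift_apply]
      exact hk _ (by omega)
    · simpa only [iterate_shift_apply, Nat.add_sub_cancel' hjk] using hlt

/-! ### The map `F` -/

section Dynamics

variable {α β : ℝ}

lemma F_mem_Ico (α β x : ℝ) : F α β x ∈ Ico (0 : ℝ) 1 :=
  ⟨Int.fract_nonneg _, Int.fract_lt_one _⟩

lemma iterate_F_mem_Ico {t : ℝ} (ht : t ∈ Ico (0 : ℝ) 1) (n : ℕ) :
    (F α β)^[n] t ∈ Ico (0 : ℝ) 1 := by
  cases n with
  | zero => exact ht
  | succ n => rw [Function.iterate_succ_apply']; exact F_mem_Ico α β _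

lemma Om_add (α β t : ℝ) (m n : ℕ) : Om α β t (m + n) = Om α β ((F α β)^[m] t) n := by
  simp only [Om, Nat.add_comm m n, Function.iterate_add_apply]

variable (hα : 0 ≤ α) (hβ : 0 < β)
include hα hβ

lemma natCast_Om {t : ℝ} (ht : t ∈ Ico (0 : ℝ) 1) (n : ℕ) :
    (Om α β t n : ℤ) = ⌊β * (F α β)^[n] t + α⌋ :=
  Int.toNat_of_nonneg <| Int.floor_nonneg.2 <|
    add_nonneg (mul_nonneg hβ.le (iterate_F_mem_Ico ht n).1) hα

lemma Om_zero_eq_iff {t : ℝ} (ht : t ∈ Ico (0 : ℝ) 1) (d : ℕ) :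
    Om α β t 0 = d ↔ ⌊β * t + α⌋ = d := by
  have h := natCast_Om hα hβ ht 0
  rw [Function.iterate_zero_apply] at h
  rw [← h, Nat.cast_inj]

lemma isOrbit_iterate_F {t : ℝ} (ht : t ∈ Ico (0 : ℝ) 1) :
    IsOrbit α β (fun n => (F α β)^[n] t) (Om α β t) := by
  intro n
  simp only
  rw [Function.iterate_succ_apply', F, Int.fract, ← natCast_Om hα hβ ht, Int.cast_natCast]

end Dynamics

/-! ### The subshift -/

lemma isOpen_cylinder (x : ℕ → ℕ) (m : ℕ) : IsOpen {y : ℕ → ℕ | ∀ i < m, y i = x i} := by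
  have : {y : ℕ → ℕ | ∀ i < m, y i = x i} = (Iio m).pi fun i => {x i} := by
    ext y
    simp
  rw [this]
  exact isOpen_set_pi (finite_Iio m) fun _ _ => isOpen_discrete _

lemma isClosed_setOf_lexLe_left (y : ℕ → ℕ) : IsClosed {x | lexLe x y} := by
  simp only [lexLe_iff_toLex_le, ← isOpen_compl_iff, compl_ofPred, not_le]
  refine isOpen_iff_forall_mem_open.2 fun x ⟨k, hk, hlt⟩ => ⟨_, ?_, isOpen_cylinder x (k + 1),
    fun _ _ => rfl⟩
  intro z hz
  refine ⟨k, fun i hi => (hk i hi).trans (hz i (by omega)).symm, ?_⟩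
  show y k < z k
  rw [hz k (by omega)]
  exact hlt

lemma isClosed_setOf_lexLe_right (y : ℕ → ℕ) : IsClosed {x | lexLe y x} := by
  simp only [lexLe_iff_toLex_le, ← isOpen_compl_iff, compl_ofPred, not_le]
  refine isOpen_iff_forall_mem_open.2 fun x ⟨k, hk, hlt⟩ => ⟨_, ?_, isOpen_cylinder x (k + 1),
    fun _ _ => rfl⟩
  intro z hz
  refine ⟨k, fun i hi => (hz i (by omega)).trans (hk i hi), ?_⟩
  show z k < y k
  rw [hz k (by omega)]
  exact hlt

section Subshift

variable {α β : ℝ}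

lemma Om_mem_Sig {t : ℝ} (ht : t ∈ Ico (0 : ℝ) 1) : Om α β t ∈ Sig α β :=
  subset_closure ⟨t, ht, rfl⟩

lemma mem_Sig_iff {x : ℕ → ℕ} :
    x ∈ Sig α β ↔ ∀ m, ∃ t ∈ Ico (0 : ℝ) 1, ∀ i < m, Om α β t i = x i := by
  constructor
  · intro hx m
    obtain ⟨_, hy, t, ht, rfl⟩ := mem_closure_iff.1 hx _ (isOpen_cylinder x m) fun _ _ => rfl
    exact ⟨t, ht, hy⟩
  · intro h
    refine mem_closure_iff.2 fun U hU hxU => ?_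
    obtain ⟨I, u, hu, hIU⟩ := isOpen_pi_iff.1 hU x hxU
    obtain ⟨t, ht, hagree⟩ := h (I.sup id + 1)
    refine ⟨Om α β t, hIU fun i hi => ?_, t, ht, rfl⟩
    rw [Finset.mem_coe] at hi
    rw [hagree i (Nat.lt_succ_of_le (Finset.le_sup (f := id) hi))]
    exact (hu i hi).2

lemma iterate_shift_mem_Sig {x : ℕ → ℕ} (hx : x ∈ Sig α β) (j : ℕ) : shift^[j] x ∈ Sig α β := by
  refine mem_Sig_iff.2 fun m => ?_
  obtain ⟨t, ht, hagree⟩ := mem_Sig_iff.1 hx (j + m)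
  refine ⟨(F α β)^[j] t, iterate_F_mem_Ico ht j, fun i hi => ?_⟩
  rw [iterate_shift_apply, ← hagree _ (by omega), Om_add]

lemma lexLe_of_mem_Sig_of_le {y : ℕ → ℕ} (h : ∀ t ∈ Ico (0 : ℝ) 1, lexLe (Om α β t) y) {x : ℕ → ℕ}
    (hx : x ∈ Sig α β) : lexLe x y :=
  (isClosed_setOf_lexLe_left y).closure_subset_iff.2 (image_subset_iff.2 h) hx

lemma lexLe_of_mem_Sig_of_ge {y : ℕ → ℕ} (h : ∀ t ∈ Ico (0 : ℝ) 1, lexLe y (Om α β t)) {x : ℕ → ℕ}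
    (hx : x ∈ Sig α β) : lexLe y x :=
  (isClosed_setOf_lexLe_right y).closure_subset_iff.2 (image_subset_iff.2 h) hx

lemma Om_zero_lexLe (hα : 0 ≤ α) (hβ : 0 < β) {x : ℕ → ℕ} (hx : x ∈ Sig α β) :
    lexLe (Om α β 0) x := by
  refine lexLe_of_mem_Sig_of_ge (fun t ht => ?_) hx
  rcases ht.1.eq_or_lt with rfl | ht0
  · exact Or.inl rfl
  · exact (isOrbit_iterate_F hα hβ ⟨le_rfl, one_pos⟩).lexLe (isOrbit_iterate_F hα hβ ht) hβ
      (fun n => (iterate_F_mem_Ico ⟨le_rfl, one_pos⟩ n).1)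
      (fun n => (iterate_F_mem_Ico ht n).2.le) ht0

end Subshift

/-- The orbit of `1` under the left-continuous version `y ↦ β y + α - (⌈β y + α⌉ - 1)` of `F`;
its digit sequence `upperDigit α β` turns out to be the supremum `b` of `Σ`. -/
def upperOrbit (α β : ℝ) : ℕ → ℝ
  | 0 => 1
  | n + 1 => β * upperOrbit α β n + α - (⌈β * upperOrbit α β n + α⌉ - 1 : ℤ)

def upperDigit (α β : ℝ) (n : ℕ) : ℕ := (⌈β * upperOrbit α β n + α⌉ - 1).toNat

section UpperOrbit

variable {α β : ℝ}

@[simp]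
lemma upperOrbit_zero : upperOrbit α β 0 = 1 := rfl

lemma upperOrbit_mem_Ioc (n : ℕ) : upperOrbit α β n ∈ Ioc (0 : ℝ) 1 := by
  cases n with
  | zero => exact ⟨one_pos, le_rfl⟩
  | succ n =>
    have h1 := Int.ceil_lt_add_one (β * upperOrbit α β n + α)
    have h2 := Int.le_ceil (β * upperOrbit α β n + α)
    simp only [upperOrbit, Int.cast_sub, Int.cast_one, mem_Ioc]
    constructor <;> linarith

variable (hα : 0 ≤ α) (hβ : 0 < β)
include hα hβ

lemma natCast_upperDigit (n : ℕ) : (upperDigit α β n : ℤ) = ⌈β * upperOrbit α β n + α⌉ - 1 := by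
  have := Int.ceil_pos.2 <| add_pos_of_pos_of_nonneg
    (mul_pos hβ (upperOrbit_mem_Ioc (α := α) (β := β) n).1) hα
  exact Int.toNat_of_nonneg (by omega)

lemma isOrbit_upperOrbit : IsOrbit α β (upperOrbit α β) (upperDigit α β) := by
  intro n
  rw [upperOrbit, ← natCast_upperDigit hα hβ, Int.cast_natCast]

lemma lexLe_upperDigit {x : ℕ → ℕ} (hx : x ∈ Sig α β) : lexLe x (upperDigit α β) :=
  lexLe_of_mem_Sig_of_le (fun _ ht =>
    (isOrbit_iterate_F hα hβ ht).lexLe (isOrbit_upperOrbit hα hβ) hβ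
      (fun n => (iterate_F_mem_Ico ht n).1) (fun n => (upperOrbit_mem_Ioc n).2) ht.2) hx

end UpperOrbit

/-! ### Cylinders and their images -/

def cylinder (α β : ℝ) (w : List ℕ) : Set ℝ :=
  {t ∈ Ico (0 : ℝ) 1 | ∀ i < w.length, Om α β t i = w.getD i 0}

def endsStep (α β : ℝ) (pq : ℝ × ℝ) (d : ℕ) : ℝ × ℝ :=
  (max (β * pq.1 + α - d) 0, min (β * pq.2 + α - d) 1)

def cylinderEnds (α β : ℝ) (w : List ℕ) : ℝ × ℝ := w.foldl (endsStep α β) (0, 1)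

lemma length_pre (s : ℕ → ℕ) (n : ℕ) : (pre s n).length = n := List.length_ofFn

lemma getD_pre (s : ℕ → ℕ) {n i : ℕ} (hi : i < n) : (pre s n).getD i 0 = s i := by
  rw [List.getD_eq_getElem _ _ (by rwa [length_pre])]
  simp [pre]

lemma pre_succ (s : ℕ → ℕ) (n : ℕ) : pre s (n + 1) = pre s n ++ [s n] := by
  rw [pre, List.ofFn_succ', List.concat_eq_append]
  rfl

section Cylinder

variable {α β : ℝ}

lemma inLang_iff_nonempty {w : List ℕ} : inLang α β w ↔ (cylinder α β w).Nonempty := by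
  constructor
  · rintro ⟨x, hx, hw⟩
    obtain ⟨t, ht, hagree⟩ := mem_Sig_iff.1 hx w.length
    refine ⟨t, ht, fun i hi => ?_⟩
    rw [hagree i hi, hw ⟨i, hi⟩, List.getD_eq_getElem _ _ hi, List.get_eq_getElem]
  · rintro ⟨t, ht, hw⟩
    refine ⟨Om α β t, Om_mem_Sig ht, fun i => ?_⟩
    rw [hw i i.2, List.getD_eq_getElem _ _ i.2, List.get_eq_getElem]

lemma mem_cylinder_append {u v : List ℕ} {t : ℝ} :
    t ∈ cylinder α β (u ++ v) ↔ t ∈ cylinder α β u ∧ (F α β)^[u.length] t ∈ cylinder α β v := by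
  simp only [cylinder, mem_ofPred_eq, List.length_append]
  constructor
  · rintro ⟨ht, h⟩
    refine ⟨⟨ht, fun i hi => ?_⟩, iterate_F_mem_Ico ht _, fun i hi => ?_⟩
    · rw [h i (by omega), List.getD_append _ _ _ _ hi]
    · rw [← Om_add, h _ (by omega), List.getD_append_right _ _ _ _ (by omega),
        Nat.add_sub_cancel_left]
  · rintro ⟨⟨ht, hu⟩, -, hv⟩
    refine ⟨ht, fun i hi => ?_⟩
    rcases lt_or_ge i u.length with hi' | hi'
    · rw [hu i hi', List.getD_append _ _ _ _ hi']
    · obtain ⟨j, rfl⟩ := Nat.exists_eq_add_of_le hi'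
      rw [Om_add, hv j (by omega), List.getD_append_right _ _ _ _ hi', Nat.add_sub_cancel_left]

lemma mem_cylinder_pre {t : ℝ} (ht : t ∈ Ico (0 : ℝ) 1) (n : ℕ) :
    t ∈ cylinder α β (pre (Om α β t) n) :=
  ⟨ht, fun i hi => (getD_pre _ (by rwa [length_pre] at hi)).symm⟩

lemma pre_mem_inLang {y : ℕ → ℕ} (hy : y ∈ Sig α β) (n : ℕ) : inLang α β (pre y n) := by
  obtain ⟨t, ht, h⟩ := mem_Sig_iff.1 hy n
  refine inLang_iff_nonempty.2 ⟨t, ht, fun i hi => ?_⟩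
  rw [length_pre] at hi
  rw [h i hi, getD_pre _ hi]

lemma mem_cylinder_singleton (hα : 0 ≤ α) (hβ : 0 < β) {t : ℝ} {d : ℕ} :
    t ∈ cylinder α β [d] ↔ t ∈ Ico (0 : ℝ) 1 ∧ ⌊β * t + α⌋ = d := by
  simp only [cylinder, mem_ofPred_eq, List.length_singleton, Nat.lt_one_iff, forall_eq,
    List.getD_cons_zero]
  exact and_congr_right fun ht => Om_zero_eq_iff hα hβ ht d

lemma cylinderEnds_append_singleton (w : List ℕ) (d : ℕ) :
    cylinderEnds α β (w ++ [d]) = endsStep α β (cylinderEnds α β w) d := by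
  rw [cylinderEnds, List.foldl_append]
  rfl

lemma cylinderEnds_bounds (w : List ℕ) :
    0 ≤ (cylinderEnds α β w).1 ∧ (cylinderEnds α β w).2 ≤ 1 := by
  induction w using List.reverseRecOn with
  | nil => exact ⟨le_rfl, le_rfl⟩
  | append_singleton w d _ =>
    rw [cylinderEnds_append_singleton]
    exact ⟨le_max_right _ _, min_le_right _ _⟩

lemma image_F_setOf_floor_eq (hβ : 0 < β) (p q : ℝ) (i : ℤ) :
    F α β '' {y ∈ Ico p q | ⌊β * y + α⌋ = i} =
      Ico (max (β * p + α - i) 0) (min (β * q + α - i) 1) := by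
  ext z
  simp only [mem_image, mem_ofPred_eq, mem_Ico, max_le_iff, lt_min_iff]
  constructor
  · rintro ⟨y, ⟨⟨hpy, hyq⟩, hy⟩, rfl⟩
    have h1 := Int.floor_le (β * y + α)
    have h2 := Int.lt_floor_add_one (β * y + α)
    rw [hy] at h1 h2
    rw [F, Int.fract, hy]
    refine ⟨⟨by nlinarith, by linarith⟩, by nlinarith, by linarith⟩
  · rintro ⟨⟨hpz, hz0⟩, hzq, hz1⟩
    have hy : β * ((z + i - α) / β) + α = z + i := by field_simp; ring
    refine ⟨(z + i - α) / β, ⟨⟨?_, ?_⟩, ?_⟩, ?_⟩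
    · rw [le_div_iff₀ hβ]; linarith
    · rw [div_lt_iff₀ hβ]; linarith
    · rw [hy, Int.floor_eq_iff]
      constructor <;> linarith
    · rw [F, hy, Int.fract_add_intCast, Int.fract_eq_self.2 ⟨hz0, hz1⟩]

variable (hα : 0 ≤ α) (hβ : 0 < β)
include hα hβ

lemma image_cylinder (w : List ℕ) :
    (F α β)^[w.length] '' cylinder α β w = Ico (cylinderEnds α β w).1 (cylinderEnds α β w).2 := by
  induction w using List.reverseRecOn with
  | nil =>
    ext t
    simp [cylinder, cylinderEnds]
  | append_singleton w d ih =>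
    have hcyl : cylinder α β (w ++ [d])
        = cylinder α β w ∩ (F α β)^[w.length] ⁻¹' cylinder α β [d] := by
      ext t
      exact mem_cylinder_append
    have hsub := Ico_subset_Ico (cylinderEnds_bounds (α := α) (β := β) w).1
      (cylinderEnds_bounds (α := α) (β := β) w).2
    have hstep := image_F_setOf_floor_eq (α := α) hβ (cylinderEnds α β w).1
      (cylinderEnds α β w).2 d
    rw [Int.cast_natCast] at hstep
    rw [List.length_append, List.length_singleton, Function.iterate_succ', image_comp, hcyl,
      image_inter_preimage, ih, cylinderEnds_append_singleton, endsStep, ← hstep]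
    congr 1
    ext y
    simp only [mem_inter_iff, mem_cylinder_singleton hα hβ, mem_ofPred_eq]
    exact ⟨fun ⟨hy, _, hd⟩ => ⟨hy, hd⟩, fun ⟨hy, hd⟩ => ⟨hy, hsub hy, hd⟩⟩

lemma inLang_iff_lt {w : List ℕ} :
    inLang α β w ↔ (cylinderEnds α β w).1 < (cylinderEnds α β w).2 := by
  rw [inLang_iff_nonempty, ← nonempty_Ico, ← image_cylinder hα hβ, image_nonempty]

end Cylinder

lemma tailAgrees_zero (s : ℕ → ℕ) (w : List ℕ) : tailAgrees s w 0 :=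
  ⟨Nat.zero_le _, fun _ h => absurd h (Nat.not_lt_zero _)⟩

lemma tailAgrees.append_singleton {s : ℕ → ℕ} {w : List ℕ} {k : ℕ} (h : tailAgrees s w k) :
    tailAgrees s (w ++ [s k]) (k + 1) := by
  obtain ⟨hk, h⟩ := h
  rw [tailAgrees, List.length_append, List.length_singleton]
  refine ⟨by omega, fun i hi => ?_⟩
  rcases Nat.lt_succ_iff_lt_or_eq.1 hi with hi | rfl
  · rw [List.getD_append _ _ _ _ (by omega), show w.length + 1 - (k + 1) + i = w.length - k + i by
      omega]
    exact h i hi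
  · rw [List.getD_append_right _ _ _ _ (by omega),
      show w.length + 1 - (i + 1) + i - w.length = 0 by omega]
    rfl

lemma tailAgrees.eq_of_le {s s' : ℕ → ℕ} {w : List ℕ} {k m : ℕ} (h : tailAgrees s w k)
    (h' : tailAgrees s' w m) (hmk : m ≤ k) : ∀ i < m, s (k - m + i) = s' i := by
  intro i hi
  rw [← h.2 _ (by omega), ← h'.2 i hi]
  congr 1
  have := h.1
  omega

section Ends

variable {α β : ℝ} (hα : 0 ≤ α) (hβ : 0 < β)

include hβ in
lemma cylinderEnds_lt_of_append {w : List ℕ} {d : ℕ}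
    (h : (cylinderEnds α β (w ++ [d])).1 < (cylinderEnds α β (w ++ [d])).2) :
    (cylinderEnds α β w).1 < (cylinderEnds α β w).2 := by
  rw [cylinderEnds_append_singleton, endsStep] at h
  have := (le_max_left _ _).trans_lt (h.trans_le (min_le_left _ _))
  exact (mul_lt_mul_iff_right₀ hβ).1 (by linarith)

include hα hβ

lemma exists_tailAgrees_fst (w : List ℕ)
    (h : (cylinderEnds α β w).1 < (cylinderEnds α β w).2) :
    ∃ k, tailAgrees (Om α β 0) w k ∧ (cylinderEnds α β w).1 = (F α β)^[k] 0 := by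
  induction w using List.reverseRecOn with
  | nil => exact ⟨0, tailAgrees_zero _ _, rfl⟩
  | append_singleton w d ih =>
    obtain ⟨k, hk, hP⟩ := ih (cylinderEnds_lt_of_append hβ h)
    have horb : (F α β)^[k + 1] 0 = β * (F α β)^[k] 0 + α - Om α β 0 k :=
      isOrbit_iterate_F hα hβ ⟨le_rfl, one_pos⟩ k
    have hc := iterate_F_mem_Ico (α := α) (β := β) ⟨le_rfl, one_pos⟩ (k + 1)
    have hQ := (cylinderEnds_bounds (α := α) (β := β) (w ++ [d])).2
    rw [cylinderEnds_append_singleton, endsStep] at h hQ ⊢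
    dsimp only at h hQ ⊢
    rw [hP] at h ⊢
    -- a digit below `a_k` empties the interval, one above it moves the left end back to `0`
    rcases lt_trichotomy d (Om α β 0 k) with hd | rfl | hd
    · have : (d : ℝ) + 1 ≤ Om α β 0 k := by exact_mod_cast hd
      linarith [le_max_left (β * (F α β)^[k] 0 + α - d) 0, hc.1]
    · exact ⟨k + 1, hk.append_singleton, by rw [horb]; exact max_eq_left (horb ▸ hc.1)⟩
    · have : (Om α β 0 k : ℝ) + 1 ≤ d := by exact_mod_cast hd
      exact ⟨0, tailAgrees_zero _ _, max_eq_right (by linarith [hc.2])⟩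

lemma exists_tailAgrees_snd (w : List ℕ)
    (h : (cylinderEnds α β w).1 < (cylinderEnds α β w).2) :
    ∃ k, tailAgrees (upperDigit α β) w k ∧ (cylinderEnds α β w).2 = upperOrbit α β k := by
  induction w using List.reverseRecOn with
  | nil => exact ⟨0, tailAgrees_zero _ _, rfl⟩
  | append_singleton w d ih =>
    obtain ⟨k, hk, hQ⟩ := ih (cylinderEnds_lt_of_append hβ h)
    have horb := isOrbit_upperOrbit hα hβ k
    have hB := upperOrbit_mem_Ioc (α := α) (β := β) (k + 1)
    have hP := (cylinderEnds_bounds (α := α) (β := β) (w ++ [d])).1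
    rw [cylinderEnds_append_singleton, endsStep] at h hP ⊢
    dsimp only at h hP ⊢
    rw [hQ] at h ⊢
    rcases lt_trichotomy d (upperDigit α β k) with hd | rfl | hd
    · have : (d : ℝ) + 1 ≤ upperDigit α β k := by exact_mod_cast hd
      exact ⟨0, tailAgrees_zero _ _, min_eq_right (by linarith [hB.1])⟩
    · exact ⟨k + 1, hk.append_singleton, by rw [horb]; exact min_eq_left (horb ▸ hB.2)⟩
    · have : (upperDigit α β k : ℝ) + 1 ≤ d := by exact_mod_cast hd
      linarith [min_le_left (β * upperOrbit α β k + α - d) 1, hB.2]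

lemma cylinderEnds_pre_upperDigit (m : ℕ) :
    (cylinderEnds α β (pre (upperDigit α β) m)).1 <
        (cylinderEnds α β (pre (upperDigit α β) m)).2 ∧
      (cylinderEnds α β (pre (upperDigit α β) m)).2 = upperOrbit α β m := by
  induction m with
  | zero => exact ⟨one_pos, rfl⟩
  | succ m ih =>
    obtain ⟨hlt, hQ⟩ := ih
    have hB := upperOrbit_mem_Ioc (α := α) (β := β) (m + 1)
    rw [pre_succ, cylinderEnds_append_singleton, endsStep]
    dsimp only
    rw [hQ] at hlt ⊢
    rw [← isOrbit_upperOrbit hα hβ m, min_eq_left hB.2]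
    exact ⟨max_lt (by rw [isOrbit_upperOrbit hα hβ m]; nlinarith) hB.1, rfl⟩

lemma upperDigit_mem_Sig : upperDigit α β ∈ Sig α β := by
  refine mem_Sig_iff.2 fun m => ?_
  obtain ⟨t, ht, h⟩ := inLang_iff_nonempty.1
    ((inLang_iff_lt hα hβ).2 (cylinderEnds_pre_upperDigit hα hβ m).1)
  exact ⟨t, ht, fun i hi => by rw [h i (by rwa [length_pre]), getD_pre _ hi]⟩

end Ends

lemma exists_first_ne_of_bddAbove_D {u v : ℕ → ℕ} (h : BddAbove (D u v)) :
    ∃ N, ∀ j, ∃ r ≤ N, (∀ i < r, v i = u (j + i)) ∧ v r ≠ u (j + r) := by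
  obtain ⟨N, hN⟩ := h
  refine ⟨N, fun j => ?_⟩
  have hex : ∃ r, v r ≠ u (j + r) := by
    by_contra! hall
    exact absurd (hN ⟨j, fun i _ => hall i⟩ : N + 1 ≤ N) (by omega)
  refine ⟨Nat.find hex, ?_, fun i hi => not_not.1 (Nat.find_min hex hi), Nat.find_spec hex⟩
  by_contra! hlt
  exact absurd (hN ⟨j, fun i _ => not_not.1 (Nat.find_min hex (by omega))⟩ : N + 1 ≤ N)
    (by omega)

section Gap

variable {α β : ℝ} (hα : 0 ≤ α) (hβ1 : 1 ≤ β)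
include hα hβ1

/-- Where `σ^s b` first leaves `a`, at a position `r ≤ N`, the two orbits are more than
`1 - F^[r+1] 0` apart. -/
lemma exists_pos_le_upperOrbit (h : BddAbove (D (upperDigit α β) (Om α β 0))) :
    ∃ δ > 0, ∀ s, δ ≤ upperOrbit α β s := by
  have hβ0 : 0 < β := by linarith
  have h0 : (0 : ℝ) ∈ Ico (0 : ℝ) 1 := left_mem_Ico.2 one_pos
  obtain ⟨N, hN⟩ := exists_first_ne_of_bddAbove_D h
  obtain ⟨m, -, hm⟩ := (Finset.range (N + 2)).exists_max_image (fun i => (F α β)^[i] 0)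
    ⟨0, by simp⟩
  have hm1 := (iterate_F_mem_Ico (α := α) (β := β) h0 m).2
  refine ⟨(1 - (F α β)^[m] 0) / β ^ (N + 1), div_pos (by linarith) (pow_pos hβ0 _), fun s => ?_⟩
  obtain ⟨r, hrN, hagree, hne⟩ := hN s
  have hgap := (isOrbit_iterate_F hα hβ0 h0).add_one_sub_le_pow_mul
    ((isOrbit_upperOrbit hα hβ0).shift s) hβ0 (fun n => (iterate_F_mem_Ico h0 n).1)
    (fun n => (upperOrbit_mem_Ioc _).2) (upperOrbit_mem_Ioc _).1 hagree hne
  simp only [add_zero, Function.iterate_zero_apply, sub_zero] at hgap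
  have hpow : β ^ (r + 1) ≤ β ^ (N + 1) := pow_le_pow_right₀ hβ1 (by omega)
  have hBs := (upperOrbit_mem_Ioc (α := α) (β := β) s).1
  have hB := (upperOrbit_mem_Ioc (α := α) (β := β) (s + (r + 1))).1
  rw [div_le_iff₀ (pow_pos hβ0 _)]
  nlinarith [hm (r + 1) (Finset.mem_range.2 (by omega))]

/-- Where `σ^j a` first leaves `b`, at a position `r ≤ N`, the two orbits are more than
`upperOrbit (r + 1)` apart. -/
lemma exists_pos_le_one_sub_iterate_F (h : BddAbove (D (Om α β 0) (upperDigit α β))) {δ : ℝ}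
    (hδ : 0 < δ) (hB : ∀ s, δ ≤ upperOrbit α β s) :
    ∃ δ' > 0, ∀ j, δ' ≤ 1 - (F α β)^[j] 0 := by
  have hβ0 : 0 < β := by linarith
  have h0 : (0 : ℝ) ∈ Ico (0 : ℝ) 1 := left_mem_Ico.2 one_pos
  obtain ⟨N, hN⟩ := exists_first_ne_of_bddAbove_D h
  refine ⟨δ / β ^ (N + 1), div_pos hδ (pow_pos hβ0 _), fun j => ?_⟩
  obtain ⟨r, hrN, hagree, hne⟩ := hN j
  have hc := fun n => iterate_F_mem_Ico (α := α) (β := β) h0 (j + n)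
  have hgap := ((isOrbit_iterate_F hα hβ0 h0).shift j).add_one_sub_le_pow_mul
    (isOrbit_upperOrbit hα hβ0) hβ0 (fun n => (hc n).1) (fun n => (upperOrbit_mem_Ioc _).2)
    (hc 0).2 (fun i hi => (hagree i hi).symm) (Ne.symm hne)
  have hpow : β ^ (r + 1) ≤ β ^ (N + 1) := pow_le_pow_right₀ hβ1 (by omega)
  have hcj := (hc 0).2
  simp only [add_zero, upperOrbit_zero] at hgap hcj
  rw [div_le_iff₀ (pow_pos hβ0 _)]
  nlinarith [hB (r + 1), (hc (r + 1)).2]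

/-- The common tail of `w` with a prefix of `a` and with a prefix of `b` makes the shorter of
these prefixes a block of the other sequence; the expansion along that block reduces the length of
the image of the cylinder to one of the two bounds above. -/
lemma exists_pos_le_cylinderEnds_sub (h₁ : BddAbove (D (Om α β 0) (upperDigit α β)))
    (h₂ : BddAbove (D (upperDigit α β) (Om α β 0))) :
    ∃ δ > 0, ∀ w, inLang α β w → δ ≤ (cylinderEnds α β w).2 - (cylinderEnds α β w).1 := by
  have hβ0 : 0 < β := by linarith
  have h0 : (0 : ℝ) ∈ Ico (0 : ℝ) 1 := left_mem_Ico.2 one_pos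
  obtain ⟨δ₁, hδ₁, hB⟩ := exists_pos_le_upperOrbit hα hβ1 h₂
  obtain ⟨δ₂, hδ₂, hc⟩ := exists_pos_le_one_sub_iterate_F hα hβ1 h₁ hδ₁ hB
  refine ⟨min δ₁ δ₂, lt_min hδ₁ hδ₂, fun w hw => ?_⟩
  have hlt := (inLang_iff_lt hα hβ0).1 hw
  obtain ⟨k₁, hk₁, hP⟩ := exists_tailAgrees_fst hα hβ0 w hlt
  obtain ⟨k₂, hk₂, hQ⟩ := exists_tailAgrees_snd hα hβ0 w hlt
  have hx := isOrbit_iterate_F hα hβ0 h0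
  have hy := isOrbit_upperOrbit hα hβ0
  rw [hP, hQ]
  rcases le_total k₂ k₁ with hk | hk
  · have key := (hx.shift (k₁ - k₂)).sub_eq_pow_mul hy (hk₁.eq_of_le hk₂ hk)
    simp only [add_zero, Nat.sub_add_cancel hk, upperOrbit_zero] at key
    rw [key]
    nlinarith [hc (k₁ - k₂), one_le_pow₀ (n := k₂) hβ1, min_le_right δ₁ δ₂]
  · have key := hx.sub_eq_pow_mul (hy.shift (k₂ - k₁)) fun i hi =>
      (hk₂.eq_of_le hk₁ hk i hi).symm
    simp only [add_zero, Nat.sub_add_cancel hk, Function.iterate_zero_apply, sub_zero] at key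
    rw [key]
    nlinarith [hB (k₂ - k₁), one_le_pow₀ (n := k₁) hβ1, min_le_left δ₁ δ₂]

end Gap

/-! ### Covering `[0, 1)` -/

section Covering

variable {α β : ℝ} (hβ : 0 < β)
include hβ

lemma surjOn_F_Ico {p q : ℝ} {i : ℤ} (hp : (i : ℝ) ≤ β * p + α) (hq : β * q + α ≤ i + 1) :
    SurjOn (F α β) (Ico p q) (Ico (β * p + α - i) (β * q + α - i)) := by
  have h := image_F_setOf_floor_eq (α := α) hβ p q i
  rw [max_eq_left (by linarith), min_eq_left (by linarith)] at h
  rw [SurjOn, ← h]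
  exact image_mono (sep_subset _ _)

lemma surjOn_F (hα1 : α ≤ 1) (h2 : 2 ≤ β + α) : SurjOn (F α β) (Ico 0 1) (Ico 0 1) := by
  have hp : β * ((1 - α) / β) + α = 1 := by field_simp; ring
  have hq : β * ((2 - α) / β) + α = 2 := by field_simp; ring
  have h := surjOn_F_Ico (i := 1) hβ (by rw [hp]; norm_num) (by rw [hq]; norm_num)
  rw [hp, hq] at h
  norm_num at h
  exact h.mono (Ico_subset_Ico (div_nonneg (by linarith) hβ.le) ((div_le_one hβ).2 (by linarith)))
    subset_rfl

/-- The interval `[p, q)` meets at most two of the cells `J_i` unless it contains a whole one, so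
`F` either maps it onto `[0, 1)` or stretches one of its pieces by `β` onto an interval. -/
lemma surjOn_F_Ico_or_exists {p q : ℝ} (hpq : p < q) :
    SurjOn (F α β) (Ico p q) (Ico 0 1) ∨ ∃ p' q', 0 ≤ p' ∧ q' ≤ 1 ∧
      β / 2 * (q - p) ≤ q' - p' ∧ SurjOn (F α β) (Ico p q) (Ico p' q') := by
  set i := ⌊β * p + α⌋
  have hi1 : (i : ℝ) ≤ β * p + α := Int.floor_le _
  have hi2 : β * p + α < i + 1 := Int.lt_floor_add_one _
  set u := (i + 1 - α) / β
  have hu : β * u + α = i + 1 := by simp only [u]; field_simp; ring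
  have hpu : p < u := by nlinarith
  have hu1 : β * (u + 1 / β) + α = i + 2 := by rw [mul_add, mul_one_div_cancel hβ.ne']; linarith
  rcases le_or_gt (u + 1 / β) q with hfull | hq
  · left
    have h := surjOn_F_Ico (α := α) (i := i + 1) hβ (p := u) (q := u + 1 / β)
      (by push_cast; linarith) (by push_cast; linarith)
    rw [hu, hu1, Int.cast_add, Int.cast_one, sub_self, show (i : ℝ) + 2 - (i + 1) = 1 by ring] at h
    exact h.mono (Ico_subset_Ico hpu.le hfull) subset_rfl
  · right
    by_cases hleft : (q - p) / 2 ≤ min q u - p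
    · refine ⟨_, _, by linarith, ?_, ?_, (surjOn_F_Ico (q := min q u) hβ hi1 ?_).mono
        (Ico_subset_Ico le_rfl (min_le_left q u)) subset_rfl⟩
      · nlinarith [min_le_right q u]
      · nlinarith
      · nlinarith [min_le_right q u]
    · have huq : u < q := by
        by_contra! h
        rw [min_eq_left h] at hleft
        linarith
      rw [min_eq_right huq.le] at hleft
      refine ⟨_, _, ?_, ?_, ?_, (surjOn_F_Ico (i := i + 1) (p := u) hβ ?_ ?_).mono
        (Ico_subset_Ico hpu.le le_rfl) subset_rfl⟩
      · push_cast; linarith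
      · push_cast; nlinarith
      · nlinarith
      · push_cast; linarith
      · push_cast; nlinarith

lemma surjOn_iterate_F_Ico (hα1 : α ≤ 1) (h2 : 2 ≤ β + α) (hβ2 : 2 ≤ β) (k : ℕ) {p q : ℝ}
    (hp : 0 ≤ p) (hq : q ≤ 1) (hpq : 1 ≤ (β / 2) ^ k * (q - p)) :
    SurjOn (F α β)^[k + 1] (Ico p q) (Ico 0 1) := by
  induction k generalizing p q with
  | zero =>
    obtain rfl : p = 0 := by simp at hpq; linarith
    obtain rfl : q = 1 := by simp at hpq; linarith
    simpa using surjOn_F hβ hα1 h2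
  | succ k ih =>
    have hhalf : 1 ≤ β / 2 := by linarith
    have hpow := pow_pos (by linarith : (0 : ℝ) < β / 2) k
    rw [Function.iterate_succ]
    have hpq' : p < q := by nlinarith [one_le_pow₀ (n := k + 1) hhalf]
    rcases surjOn_F_Ico_or_exists (α := α) hβ hpq' with hfull | ⟨p', q', hp', hq', hlen, hs⟩
    · exact (ih le_rfl le_rfl (by simpa using one_le_pow₀ hhalf)).comp hfull
    · exact (ih hp' hq' (by rw [pow_succ] at hpq; nlinarith)).comp hs

end Covering

/-! ### Specification -/

section Gluing

variable {α β : ℝ} (hα : 0 ≤ α) (hα1 : α ≤ 1) (hβ2 : 2 ≤ β)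
include hα hα1 hβ2

/-- Since the image of the cylinder of `W` is an interval of length at least `δ`, after `k + 1`
more steps it covers `[0, 1)`, in particular the cylinder of `w`. -/
lemma exists_append_mem_inLang {δ : ℝ} {k : ℕ}
    (hgap : ∀ w, inLang α β w → δ ≤ (cylinderEnds α β w).2 - (cylinderEnds α β w).1)
    (hk : 1 ≤ (β / 2) ^ k * δ) {W w : List ℕ} (hW : inLang α β W) (hw : inLang α β w) :
    ∃ u : List ℕ, u.length = k + 1 ∧ inLang α β u ∧ inLang α β (W ++ u ++ w) := by
  have hβ0 : 0 < β := by linarith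
  obtain ⟨t', ht'⟩ := inLang_iff_nonempty.1 hw
  have hsurj := surjOn_iterate_F_Ico hβ0 hα1 (by linarith) hβ2 k
    (cylinderEnds_bounds W).1 (cylinderEnds_bounds W).2
    (hk.trans (mul_le_mul_of_nonneg_left (hgap W hW) (by positivity)))
  obtain ⟨x, hx, hxt'⟩ := hsurj ht'.1
  rw [← image_cylinder hα hβ0] at hx
  obtain ⟨t, ht, rfl⟩ := hx
  have hu := mem_cylinder_pre (α := α) (β := β)
    (iterate_F_mem_Ico (α := α) (β := β) ht.1 W.length) (k + 1)
  refine ⟨_, length_pre _ _, inLang_iff_nonempty.2 ⟨_, hu⟩, inLang_iff_nonempty.2 ⟨t, ?_⟩⟩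
  rw [List.append_assoc, mem_cylinder_append, mem_cylinder_append, length_pre, hxt']
  exact ⟨ht, hu, ht'⟩

end Gluing

lemma glue_zero (w : Fin 1 → List ℕ) (v : Fin 0 → List ℕ) : glue w v = w 0 := by
  simp [glue]

lemma glue_one (w : Fin 2 → List ℕ) (v : Fin 1 → List ℕ) : glue w v = w 0 ++ v 0 ++ w 1 := by
  simp [glue, List.ofFn_succ, Fin.last]

lemma glue_snoc {n : ℕ} (w : Fin (n + 2) → List ℕ) (v : Fin n → List ℕ) (u : List ℕ) :
    glue w (Fin.snoc v u) = glue (fun i => w i.castSucc) v ++ u ++ w (Fin.last (n + 1)) := by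
  simp only [glue]
  rw [List.ofFn_succ']
  simp only [Fin.snoc_castSucc, Fin.snoc_last]
  rw [List.concat_eq_append, List.flatten_append]
  simp [List.append_assoc]

lemma hasSpec_of_forall_exists_append {lang : List ℕ → Prop} {τ : ℕ} (hτ : 1 ≤ τ)
    (h : ∀ W w, lang W → lang w → ∃ u, u.length = τ ∧ lang u ∧ lang (W ++ u ++ w)) :
    HasSpec lang lang := by
  refine ⟨τ, hτ, fun n => ?_⟩
  induction n with
  | zero => exact fun w hw => ⟨Fin.elim0, fun i => i.elim0, by rw [glue_zero]; exact hw 0⟩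
  | succ n ih =>
    intro w hw
    obtain ⟨v, hv, hglue⟩ := ih (fun i => w i.castSucc) fun i => hw _
    obtain ⟨u, hul, hu, hWu⟩ := h _ _ hglue (hw (Fin.last _))
    refine ⟨Fin.snoc v u, fun i => ?_, by rw [glue_snoc]; exact hWu⟩
    refine Fin.lastCases ?_ (fun j => ?_) i
    · rw [Fin.snoc_last]
      exact ⟨hul, hu⟩
    · rw [Fin.snoc_castSucc]
      exact hv j

lemma HasSpec.exists_append {lang G : List ℕ → Prop} (h : HasSpec lang G) :
    ∃ τ, ∀ u w, G u → G w → ∃ v : List ℕ, v.length = τ ∧ lang (u ++ v ++ w) := by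
  obtain ⟨τ, -, h⟩ := h
  refine ⟨τ, fun u w hu hw => ?_⟩
  obtain ⟨v, hv, hglue⟩ := h 1 ![u, w] fun i => by fin_cases i <;> assumption
  exact ⟨v 0, (hv 0).1, by simpa [glue_one] using hglue⟩

section Specification

variable {α β : ℝ} (hα : 0 ≤ α) (hα1 : α ≤ 1) (hβ2 : 2 < β)
include hα hα1 hβ2

lemma hasSpec_of_bddAbove (h₁ : BddAbove (D (Om α β 0) (upperDigit α β)))
    (h₂ : BddAbove (D (upperDigit α β) (Om α β 0))) : HasSpec (inLang α β) (inLang α β) := by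
  obtain ⟨δ, hδ, hgap⟩ := exists_pos_le_cylinderEnds_sub hα (by linarith) h₁ h₂
  obtain ⟨k, hk⟩ := pow_unbounded_of_one_lt δ⁻¹ (by linarith : (1 : ℝ) < β / 2)
  refine hasSpec_of_forall_exists_append (Nat.succ_pos k) fun W w hW hw =>
    exists_append_mem_inLang hα hα1 hβ2.le hgap ?_ hW hw
  have := mul_lt_mul_of_pos_right hk hδ
  rw [inv_mul_cancel₀ hδ.ne'] at this
  exact this.le

end Specification

section Forward

variable {α β : ℝ} (hα : 0 ≤ α) (hα1 : α < 1) (hβ1 : 1 < β)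
include hα hα1 hβ1

lemma singleton_mem_inLang {d : ℕ} (hd : d ≤ 1) : inLang α β [d] := by
  have hd' : (d : ℝ) ≤ 1 := by exact_mod_cast hd
  rw [inLang_iff_lt hα (by linarith)]
  exact max_lt (lt_min (by linarith) (by linarith)) (lt_min (by linarith) one_pos)

lemma exists_mem_Sig_ne_of_hasSpec (h : HasSpec (inLang α β) (inLang α β)) :
    ∃ τ, ∀ y ∈ Sig α β, ∀ j c, ∃ x ∈ Sig α β, (∀ i < j, x i = y i) ∧ x (j + τ) ≠ c := by
  obtain ⟨τ, hτ⟩ := h.exists_append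
  refine ⟨τ, fun y hy j c => ?_⟩
  obtain ⟨d, hd, hdc⟩ : ∃ d ≤ 1, d ≠ c := by
    rcases Nat.eq_zero_or_pos c with rfl | hc
    exacts [⟨1, le_rfl, one_ne_zero⟩, ⟨0, zero_le_one, hc.ne⟩]
  obtain ⟨v, hv, x, hx, hxw⟩ := hτ (pre y j) [d]
    (pre_mem_inLang hy j) (singleton_mem_inLang hα hα1 hβ1 hd)
  refine ⟨x, hx, fun i hi => ?_, ?_⟩
  · have := hxw ⟨i, by simp [length_pre, hv]; omega⟩
    simpa [List.getElem_append_left, length_pre, hv, hi, pre] using this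
  · have := hxw ⟨j + τ, by simp [length_pre, hv]⟩
    simp only [List.get_eq_getElem] at this
    rw [this, List.getElem_append_right (by simp [length_pre, hv])]
    simpa [length_pre, hv] using hdc

/-- A long prefix of `a` inside `b` would force the digit placed by specification. -/
lemma bddAbove_D_Om_zero_of_hasSpec (h : HasSpec (inLang α β) (inLang α β)) {b : ℕ → ℕ}
    (hb : b ∈ Sig α β) (hbsup : ∀ x ∈ Sig α β, lexLe x b) : BddAbove (D b (Om α β 0)) := by
  obtain ⟨τ, hτ⟩ := exists_mem_Sig_ne_of_hasSpec hα hα1 hβ1 h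
  by_contra hD
  obtain ⟨n, ⟨j, hj⟩, hn⟩ := not_bddAbove_iff.1 hD τ
  obtain ⟨x, hx, hxb, hxτ⟩ := hτ b hb j (Om α β 0 τ)
  have hlo := Om_zero_lexLe hα (by linarith) (iterate_shift_mem_Sig hx j)
  have hhi := (hbsup x hx).iterate_shift hxb
  refine hxτ ?_
  rw [← iterate_shift_apply x j τ]
  exact hlo.agree_of_lexLe hhi (fun i hi => by rw [iterate_shift_apply]; exact hj i hi) τ hn

/-- A long prefix of `b` inside `a` would force the digit placed by specification. -/
lemma bddAbove_D_of_hasSpec (h : HasSpec (inLang α β) (inLang α β)) {b : ℕ → ℕ}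
    (hbsup : ∀ x ∈ Sig α β, lexLe x b) : BddAbove (D (Om α β 0) b) := by
  obtain ⟨τ, hτ⟩ := exists_mem_Sig_ne_of_hasSpec hα hα1 hβ1 h
  by_contra hD
  obtain ⟨n, ⟨j, hj⟩, hn⟩ := not_bddAbove_iff.1 hD τ
  obtain ⟨x, hx, hxa, hxτ⟩ := hτ _ (Om_mem_Sig (left_mem_Ico.2 one_pos)) j (Om α β 0 (j + τ))
  have hlo := (Om_zero_lexLe hα (by linarith) hx).iterate_shift fun i hi => (hxa i hi).symm
  have hhi := hbsup _ (iterate_shift_mem_Sig hx j)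
  refine hxτ ?_
  rw [← iterate_shift_apply x j τ, ← iterate_shift_apply (Om α β 0) j τ]
  exact hlo.agree_of_lexLe hhi (fun i hi => by rw [iterate_shift_apply]; exact (hj i hi).symm) τ hn

end Forward

/-- **Theorem (specification characterization).** For `0 ≤ α < 1` and `β > 2`, the
subshift `Σ` has specification if and only if the sets `𝖣(a)` and `𝖣(b)` are both
bounded, where `a = Ω(0)` and `b` is the lexicographic supremum of `Σ`. -/
theorem specification_iff_bounded (α β : ℝ) (hα0 : 0 ≤ α) (hα1 : α < 1) (hβ : 2 < β)
    (b : ℕ → ℕ) (hb : b ∈ Sig α β) (hbsup : ∀ x ∈ Sig α β, lexLe x b) :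
    HasSpec (inLang α β) (inLang α β) ↔
      BddAbove (D (Om α β 0) b) ∧ BddAbove (D b (Om α β 0)) := by
  refine ⟨fun h => ⟨bddAbove_D_of_hasSpec hα0 hα1 (by linarith) h hbsup,
    bddAbove_D_Om_zero_of_hasSpec hα0 hα1 (by linarith) h hb hbsup⟩, fun ⟨h₁, h₂⟩ => ?_⟩
  obtain rfl : b = upperDigit α β := lexLe_antisymm (lexLe_upperDigit hα0 (by linarith) hb)
    (hbsup _ (upperDigit_mem_Sig hα0 (by linarith)))
  exact hasSpec_of_bddAbove hα0 hα1.le hβ h₁ h₂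

end IntermediateBeta
end
end

section
/- Fix reals α, β with 0 ≤ α < 1 and β > 1. For every word w in the language 𝓛 of Σ, if k₁(w) = k₂(w) then k₁(w) = k₂(w) = 0; equivalently, no word of 𝓛 has a tail segment of length k ≥ 1 agreeing simultaneously with (a_1,…,a_k) and with (b_1,…,b_k). -/
noncomputable section

namespace IntermediateBeta

/-! The word `a` starts with the digit `⌊α⌋ = 0`, while `b` dominates the digit sequence of
`(1 - α) / β`, which starts with `1`. A tail segment of length `k ≥ 1` agreeing with both
`a` and `b` would have a first letter equal to `a 0` and to `b 0`. -/

theorem Om_apply_zero (α β x : ℝ) : Om α β x 0 = (⌊β * x + α⌋).toNat := rfl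

theorem Om_zero_apply_zero {α : ℝ} (β : ℝ) (hα0 : 0 ≤ α) (hα1 : α < 1) : Om α β 0 0 = 0 := by
  rw [Om_apply_zero, mul_zero, zero_add, Int.floor_eq_zero_iff.2 ⟨hα0, hα1⟩, Int.toNat_zero]

theorem Om_one_sub_div_apply_zero {α β : ℝ} (hβ : β ≠ 0) : Om α β ((1 - α) / β) 0 = 1 := by
  rw [Om_apply_zero, mul_div_cancel₀ _ hβ, sub_add_cancel, Int.floor_one, Int.toNat_one]

theorem one_sub_div_mem_Ico {α β : ℝ} (hα0 : 0 ≤ α) (hα1 : α < 1) (hβ : 1 < β) :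
    (1 - α) / β ∈ Set.Ico (0 : ℝ) 1 := by
  have hβ0 : 0 < β := zero_lt_one.trans hβ
  exact ⟨div_nonneg (by linarith) hβ0.le, (div_lt_one hβ0).2 (by linarith)⟩

theorem Om_mem_Sig_s6 {α β x : ℝ} (hx : x ∈ Set.Ico (0 : ℝ) 1) : Om α β x ∈ Sig α β :=
  subset_closure ⟨x, hx, rfl⟩

theorem lexLe.apply_zero_le {x y : ℕ → ℕ} (hxy : lexLe x y) : x 0 ≤ y 0 := by
  rcases hxy with rfl | ⟨k, hk, hlt⟩
  · exact le_rfl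
  · rcases k with _ | k
    · exact hlt.le
    · exact (hk 0 k.succ_pos).le

theorem apply_zero_pos_of_forall_lexLe {α β : ℝ} (hα0 : 0 ≤ α) (hα1 : α < 1) (hβ : 1 < β)
    {b : ℕ → ℕ} (hbsup : ∀ y ∈ Sig α β, lexLe y b) : 0 < b 0 := by
  have hy := hbsup _ (Om_mem_Sig_s6 (one_sub_div_mem_Ico hα0 hα1 hβ))
  calc 0 < 1 := zero_lt_one
    _ = Om α β ((1 - α) / β) 0 := (Om_one_sub_div_apply_zero (zero_lt_one.trans hβ).ne').symm
    _ ≤ b 0 := hy.apply_zero_le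

theorem tailAgrees_kmax (s : ℕ → ℕ) (w : List ℕ) : tailAgrees s w (kmax s w) :=
  Nat.sSup_mem (s := {k | tailAgrees s w k})
    ⟨0, Nat.zero_le _, fun _ hi => absurd hi (Nat.not_lt_zero _)⟩ ⟨w.length, fun _ hk => hk.1⟩

theorem kmax_eq_zero_of_kmax_eq {s t : ℕ → ℕ} (hst : s 0 ≠ t 0) {w : List ℕ}
    (h : kmax s w = kmax t w) : kmax s w = 0 := by
  by_contra hne
  have hpos : 0 < kmax s w := Nat.pos_of_ne_zero hne
  have hs := (tailAgrees_kmax s w).2 0 hpos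
  have ht := (tailAgrees_kmax t w).2 0 (h ▸ hpos)
  rw [← h] at ht
  exact hst (hs.symm.trans ht)

theorem k1_eq_k2_imp_zero_general (α β : ℝ) (hα0 : 0 ≤ α) (hα1 : α < 1) (hβ : 1 < β)
    (b : ℕ → ℕ) (hbsup : ∀ y ∈ Sig α β, lexLe y b)
    (w : List ℕ)
    (h : kmax (Om α β 0) w = kmax b w) :
    kmax (Om α β 0) w = 0 ∧ kmax b w = 0 := by
  have hhead : Om α β 0 0 ≠ b 0 := by
    rw [Om_zero_apply_zero β hα0 hα1]
    exact (apply_zero_pos_of_forall_lexLe hα0 hα1 hβ hbsup).ne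
  have hzero := kmax_eq_zero_of_kmax_eq hhead h
  exact ⟨hzero, h ▸ hzero⟩

/-- **No vertex `[k,k]` other than `[0,0]`.** For `0 ≤ α < 1` and `β > 1` and
every word `w ∈ 𝓛`, if `k₁(w) = k₂(w)` then both are zero: no word of `𝓛` has a
tail segment of length `k ≥ 1` agreeing simultaneously with `(a_1,…,a_k)` and
`(b_1,…,b_k)`. -/
theorem k1_eq_k2_imp_zero (α β : ℝ) (hα0 : 0 ≤ α) (hα1 : α < 1) (hβ : 1 < β)
    (b : ℕ → ℕ) (hb : b ∈ Sig α β) (hbsup : ∀ y ∈ Sig α β, lexLe y b)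
    (w : List ℕ) (hw : inLang α β w)
    (h : kmax (Om α β 0) w = kmax b w) :
    kmax (Om α β 0) w = 0 ∧ kmax b w = 0 :=
  k1_eq_k2_imp_zero_general α β hα0 hα1 hβ b hbsup w h

end IntermediateBeta
end
end
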